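/- For any two skew diagrams I and J, the supersymmetric skew Schur functions satisfy s_I(X,Y) · s_J(X,Y) = s_{I▶J}(X,Y) + s_{I↑J}(X,Y). -/

import Mathlib

noncomputable section

/-- A box in the plane: `(row, column)`, rows increasing downward (English notation). -/
abbrev Box : Type := ℤ × ℤ

/-- The content of a box `(i, j)` is `j - i`. -/
def boxContent (b : Box) : ℤ := b.2 - b.1

/-- An integer partition, indexed from `1` (the value `part 0` is irrelevant). -/
structure Partition' where
  part : ℕ → ℕ
  antitone : ∀ ⦃i j : ℕ⦄, i ≤ j → part j ≤ part i
  eventually_zero : ∃ N : ℕ, ∀ i : ℕ, N ≤ i → part i = 0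

/-- The skew diagram `λ/μ`: boxes `(i, j)` with `i ≥ 1` and `μ_i < j ≤ λ_i`. -/
def skewCells (lam mu : Partition') : Set Box :=
  {b : Box | 1 ≤ b.1 ∧ (mu.part b.1.toNat : ℤ) < b.2 ∧ b.2 ≤ (lam.part b.1.toNat : ℤ)}

/-- `D` is the set of boxes of a skew diagram `λ/μ` for some partitions `μ ⊆ λ`. -/
def IsSkewShape (D : Set Box) : Prop :=
  ∃ lam mu : Partition', (∀ i, mu.part i ≤ lam.part i) ∧ D = skewCells lam mu

/-- Translate a set of boxes by a vector `v`. -/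
def boxTranslate (v : Box) (D : Set Box) : Set Box := (fun b => b + v) '' D

/-- `D` is a translate of a skew diagram. -/
def IsSkewLike (D : Set Box) : Prop := ∃ v : Box, IsSkewShape (boxTranslate v D)

/-- Two boxes share a common edge. -/
def boxAdj (a b : Box) : Prop :=
  (a.1 = b.1 ∧ (a.2 = b.2 + 1 ∨ b.2 = a.2 + 1)) ∨
  (a.2 = b.2 ∧ (a.1 = b.1 + 1 ∨ b.1 = a.1 + 1))

/-- Any two boxes of `D` are joined by a path of boxes of `D` in which consecutive
boxes share a common edge. -/
def EdgewiseConnected (D : Set Box) : Prop :=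
  ∀ a ∈ D, ∀ b ∈ D, Relation.ReflTransGen (fun x y => x ∈ D ∧ y ∈ D ∧ boxAdj x y) a b

/-- `D` contains no `2 × 2` block of boxes. -/
def NoTwoByTwo (D : Set Box) : Prop :=
  ∀ b : Box, ¬(b ∈ D ∧ (b.1, b.2 + 1) ∈ D ∧ (b.1 + 1, b.2) ∈ D ∧ (b.1 + 1, b.2 + 1) ∈ D)

/-- A border strip (ribbon): a nonempty edgewise connected skew diagram (up to translation)
containing no `2 × 2` block of boxes. -/
def IsBorderStrip (B : Set Box) : Prop :=
  B.Nonempty ∧ IsSkewLike B ∧ EdgewiseConnected B ∧ NoTwoByTwo B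

/-- `b` is the starting box (lower-left end) of `B`: no box of `B` directly to its left
nor directly below it. -/
def IsStartBox (B : Set Box) (b : Box) : Prop :=
  b ∈ B ∧ (b.1, b.2 - 1) ∉ B ∧ (b.1 + 1, b.2) ∉ B

/-- `b` is the ending box (upper-right end) of `B`: no box of `B` directly above it
nor directly to its right. -/
def IsEndBox (B : Set Box) (b : Box) : Prop :=
  b ∈ B ∧ (b.1 - 1, b.2) ∉ B ∧ (b.1, b.2 + 1) ∉ B

/-- The strip `B` has starting box of content `p` and ending box of content `q`. -/
def HasPQ (B : Set Box) (p q : ℤ) : Prop :=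
  (∃ b : Box, IsStartBox B b ∧ boxContent b = p) ∧
  (∃ b : Box, IsEndBox B b ∧ boxContent b = q)

/-- An outside decomposition of `D`: a partition of the boxes of `D` into pairwise disjoint
border strips, each strip having its starting box on the left or bottom perimeter of `D` and
its ending box on the right or top perimeter of `D`. -/
def IsOutsideDecomposition (D : Set Box) (P : Set (Set Box)) : Prop :=
  (∀ θ ∈ P, IsBorderStrip θ ∧ θ ⊆ D) ∧
  (∀ b ∈ D, ∃! θ : Set Box, θ ∈ P ∧ b ∈ θ) ∧
  (∀ θ ∈ P, ∀ b : Box, IsStartBox θ b → ((b.1, b.2 - 1) ∉ D ∨ (b.1 + 1, b.2) ∉ D)) ∧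
  (∀ θ ∈ P, ∀ b : Box, IsEndBox θ b → ((b.1 - 1, b.2) ∉ D ∨ (b.1, b.2 + 1) ∉ D))

/-- The box `b` of `D` goes up in the outside decomposition `P`: in the strip of `P`
containing it, the next box is directly above it; an ending box goes up when no box of `D`
lies directly above it. -/
def GoesUp (D : Set Box) (P : Set (Set Box)) (b : Box) : Prop :=
  ∃ θ ∈ P, b ∈ θ ∧ ((b.1 - 1, b.2) ∈ θ ∨ (IsEndBox θ b ∧ (b.1 - 1, b.2) ∉ D))

/-- The box `b` of `D` goes right in the outside decomposition `P`: in the strip of `P`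
containing it, the next box is directly to its right; an ending box goes right when some box
of `D` lies directly above it. -/
def GoesRight (D : Set Box) (P : Set (Set Box)) (b : Box) : Prop :=
  ∃ θ ∈ P, b ∈ θ ∧ ((b.1, b.2 + 1) ∈ θ ∨ (IsEndBox θ b ∧ (b.1 - 1, b.2) ∈ D))

/-- `T` is a cutting strip of the outside decomposition `P` of `D`: a border strip whose
boxes are labeled by the contents of `D` (each content appearing once), in which the box
labeled `c` goes up or goes right according as the boxes of the diagonal of content `c`
of `D` go up or go right in `P`. -/
def IsCuttingStripOf (D : Set Box) (P : Set (Set Box)) (T : Set Box) : Prop :=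
  IsBorderStrip T ∧ boxContent '' T = boxContent '' D ∧
  ∀ b ∈ T, ∀ c ∈ D, boxContent c = boxContent b →
    (((b.1 - 1, b.2) ∈ T → GoesUp D P c) ∧ ((b.1, b.2 + 1) ∈ T → GoesRight D P c))

/-- The segment `φ[p, q]` of a strip `T`: its boxes of content between `p` and `q`. -/
def stripSegment (T : Set Box) (p q : ℤ) : Set Box :=
  {b ∈ T | p ≤ boxContent b ∧ boxContent b ≤ q}

/-- The box of content `c` of the strip `T` goes up (the next box is directly above it). -/
def StripGoesUpAt (T : Set Box) (c : ℤ) : Prop :=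
  ∃ b ∈ T, boxContent b = c ∧ (b.1 - 1, b.2) ∈ T

/-- The box of content `c` of the strip `T` goes right (the next box is directly right of it). -/
def StripGoesRightAt (T : Set Box) (c : ℤ) : Prop :=
  ∃ b ∈ T, boxContent b = c ∧ (b.1, b.2 + 1) ∈ T

/-- `T'` is obtained from the strip `T` by reversing the direction (up versus right) of the
box labeled `i`, keeping the directions of all other boxes. -/
def IsTwist (i : ℤ) (T T' : Set Box) : Prop :=
  boxContent '' T' = boxContent '' T ∧
  (∀ c : ℤ, c ≠ i → (StripGoesUpAt T c ↔ StripGoesUpAt T' c)) ∧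
  (StripGoesUpAt T i ↔ StripGoesRightAt T' i)

/-- The inversion number of an outside decomposition: the number of ordered pairs of
strips `(θ₁, θ₂)` with `p(θ₁) > p(θ₂)` and `q(θ₁) < q(θ₂)`. -/
def invOD (P : Set (Set Box)) : ℕ :=
  {θθ : Set Box × Set Box | θθ.1 ∈ P ∧ θθ.2 ∈ P ∧
    ∃ p₁ q₁ p₂ q₂ : ℤ, HasPQ θθ.1 p₁ q₁ ∧ HasPQ θθ.2 p₂ q₂ ∧ p₂ < p₁ ∧ q₁ < q₂}.ncard

/-- A semistandard Young tableau of shape `D`: entries (variable indices) weakly increase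
along rows and strictly increase down columns; entries outside `D` are normalized to `0`. -/
def IsSSYT (D : Set Box) (T : Box → ℕ) : Prop :=
  (∀ b ∈ D, (b.1, b.2 + 1) ∈ D → T b ≤ T (b.1, b.2 + 1)) ∧
  (∀ b ∈ D, (b.1 + 1, b.2) ∈ D → T b < T (b.1 + 1, b.2)) ∧
  (∀ b : Box, b ∉ D → T b = 0)

/-- The skew Schur function of a skew diagram `D`, as a formal power series in the
variables `x_n` (`n : ℕ`): the coefficient of a monomial `μ` is the number of semistandard
Young tableaux of shape `D` using each variable `n` exactly `μ n` times. -/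
def schur (D : Set Box) : MvPowerSeries ℕ ℤ :=
  fun μ => ({T : Box → ℕ | IsSSYT D T ∧ ∀ n : ℕ, μ n = {b ∈ D | T b = n}.ncard}.ncard : ℤ)

/-- `b` is the upper-right corner box of `D`: the rightmost box of the top row. -/
def IsUpperRightCorner (D : Set Box) (b : Box) : Prop :=
  b ∈ D ∧ (∀ c ∈ D, b.1 ≤ c.1) ∧ ∀ c ∈ D, c.1 = b.1 → c.2 ≤ b.2

/-- `b` is the lower-left corner box of `D`: the leftmost box of the bottom row. -/
def IsLowerLeftCorner (D : Set Box) (b : Box) : Prop :=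
  b ∈ D ∧ (∀ c ∈ D, c.1 ≤ b.1) ∧ ∀ c ∈ D, c.1 = b.1 → b.2 ≤ c.2

/-- The block (edgewise connected component) of `D` containing the box `a`. -/
def blockOf (D : Set Box) (a : Box) : Set Box :=
  {b : Box | Relation.ReflTransGen (fun x y => x ∈ D ∧ y ∈ D ∧ boxAdj x y) a b}

/-- The complete homogeneous symmetric function `h_r` (`h_0 = 1`, `h_r = 0` for `r < 0`):
the sum of all monomials of degree `r`. -/
def hSym (r : ℤ) : MvPowerSeries ℕ ℤ :=
  fun μ => if ((μ.sum fun _ e => e : ℕ) : ℤ) = r then 1 else 0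

/-- The elementary symmetric function `e_r` (`e_0 = 1`, `e_r = 0` for `r < 0`):
the sum of all squarefree monomials of degree `r`. -/
def eSym (r : ℤ) : MvPowerSeries ℕ ℤ :=
  fun μ => if (∀ n ∈ μ.support, μ n = 1) ∧ ((μ.sum fun _ e => e : ℕ) : ℤ) = r then 1 else 0

/-- The `j`-th part (`j ≥ 1`) of the conjugate partition: the number of indices `i ≥ 1`
with `λ_i ≥ j`. -/
def conjPart (lam : Partition') (j : ℕ) : ℕ := {i : ℕ | 1 ≤ i ∧ j ≤ lam.part i}.ncard

/-- The order on the supersymmetric alphabet `x_0 < x_1 < ⋯ < y_0 < y_1 < ⋯`,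
with `Sum.inl n` representing `x_n` and `Sum.inr n` representing `y_n`. -/
def entryLE : ℕ ⊕ ℕ → ℕ ⊕ ℕ → Prop
  | Sum.inl a, Sum.inl b => a ≤ b
  | Sum.inl _, Sum.inr _ => True
  | Sum.inr _, Sum.inl _ => False
  | Sum.inr a, Sum.inr b => a ≤ b

/-- A super tableau of shape `D`: rows and columns weakly increase, the `x`-symbols
strictly increase down columns, the `y`-symbols strictly increase along rows; entries
outside `D` are normalized to `Sum.inl 0`. -/
def IsSuperSSYT (D : Set Box) (T : Box → ℕ ⊕ ℕ) : Prop :=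
  (∀ b ∈ D, (b.1, b.2 + 1) ∈ D → entryLE (T b) (T (b.1, b.2 + 1))) ∧
  (∀ b ∈ D, (b.1 + 1, b.2) ∈ D → entryLE (T b) (T (b.1 + 1, b.2))) ∧
  (∀ b ∈ D, (b.1 + 1, b.2) ∈ D →
    ∀ a c : ℕ, T b = Sum.inl a → T (b.1 + 1, b.2) = Sum.inl c → a < c) ∧
  (∀ b ∈ D, (b.1, b.2 + 1) ∈ D →
    ∀ a c : ℕ, T b = Sum.inr a → T (b.1, b.2 + 1) = Sum.inr c → a < c) ∧
  (∀ b : Box, b ∉ D → T b = Sum.inl 0)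

/-- The supersymmetric skew Schur function `s_D(X, Y)`, as a formal power series in the
variables `x_n, y_n`: the coefficient of a monomial `μ` is the number of super tableaux
of shape `D` using each symbol `v` exactly `μ v` times. -/
def superSchur (D : Set Box) : MvPowerSeries (ℕ ⊕ ℕ) ℤ :=
  fun μ =>
    ({T : Box → ℕ ⊕ ℕ | IsSuperSSYT D T ∧
        ∀ v : ℕ ⊕ ℕ, μ v = {b ∈ D | T b = v}.ncard}.ncard : ℤ)

/-!
A tableau of `I ▶ J` or `I ↑ J` is the same thing as a tableau `T₁` of `I` together with a
tableau `T₂` of `J`, glued along the upper-right corner `u` of `I` and the lower-left corner `l`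
of `J`: the only new adjacency is between `u` and the translate of `l`, and it asks that
`T₁ u` may stand left of `T₂ l` in a row (for `▶`), resp. that `T₂ l` may stand above `T₁ u` in
a column (for `↑`). In the super alphabet exactly one of these two conditions holds for any two
symbols, so every pair `(T₁, T₂)` glues into exactly one of the two shapes, with the same content.
Comparing coefficients as counts of (pairs of) tableaux of fixed content gives the product rule.
-/

namespace SuperSchur

section GenFun

open Finset.HasAntidiagonal

variable {α β σ : Type*} {X : Set α} {Y : Set β} {w : α → σ →₀ ℕ} {w' : β → σ →₀ ℕ}

def genFun (X : Set α) (w : α → σ →₀ ℕ) : MvPowerSeries σ ℤ :=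
  fun μ => ({x ∈ X | w x = μ}.ncard : ℤ)

theorem coeff_genFun (X : Set α) (w : α → σ →₀ ℕ) (μ : σ →₀ ℕ) :
    MvPowerSeries.coeff μ (genFun X w) = {x ∈ X | w x = μ}.ncard :=
  rfl

theorem genFun_eq_of_bijOn (f : α → β) (hf : Set.BijOn f X Y) (hw : ∀ x ∈ X, w' (f x) = w x) :
    genFun Y w' = genFun X w := by
  ext μ
  have hfibre : {y ∈ Y | w' y = μ} = f '' {x ∈ X | w x = μ} := by
    rw [← hf.image_eq]
    ext y
    constructor
    · rintro ⟨⟨x, hx, rfl⟩, hμ⟩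
      exact ⟨x, ⟨hx, (hw x hx).symm.trans hμ⟩, rfl⟩
    · rintro ⟨x, ⟨hx, hμ⟩, rfl⟩
      exact ⟨⟨x, hx, rfl⟩, (hw x hx).trans hμ⟩
  rw [coeff_genFun, coeff_genFun, hfibre, (hf.injOn.mono fun x hx => hx.1).ncard_image]

theorem genFun_sep_add_sep_not (hX : ∀ μ, {x ∈ X | w x = μ}.Finite) (P : α → Prop) :
    genFun {x ∈ X | P x} w + genFun {x ∈ X | ¬P x} w = genFun X w := by
  ext μ
  have hsplit : {x ∈ X | w x = μ} =
      {x ∈ {x ∈ X | P x} | w x = μ} ∪ {x ∈ {x ∈ X | ¬P x} | w x = μ} := by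
    ext x
    simp only [Set.mem_ofPred_eq, Set.mem_union]
    tauto
  rw [map_add, coeff_genFun, coeff_genFun, coeff_genFun, hsplit,
    Set.ncard_union_eq _ ((hX μ).subset fun x hx => ⟨hx.1.1, hx.2⟩)
      ((hX μ).subset fun x hx => ⟨hx.1.1, hx.2⟩), Nat.cast_add]
  exact Set.disjoint_left.mpr fun x hx hx' => hx'.1.2 hx.1.2

variable [DecidableEq σ]

theorem sep_prod_eq_biUnion (μ : σ →₀ ℕ) :
    {p ∈ X ×ˢ Y | w p.1 + w' p.2 = μ} =
      ⋃ q ∈ antidiagonal μ, {x ∈ X | w x = q.1} ×ˢ {y ∈ Y | w' y = q.2} := by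
  ext ⟨x, y⟩
  simp only [Set.mem_ofPred_eq, Set.mem_prod, Set.mem_iUnion, mem_antidiagonal, exists_prop,
    Prod.exists]
  constructor
  · rintro ⟨⟨hx, hy⟩, hμ⟩
    exact ⟨w x, w' y, hμ, ⟨hx, rfl⟩, hy, rfl⟩
  · rintro ⟨_, _, hμ, ⟨hx, rfl⟩, hy, rfl⟩
    exact ⟨⟨hx, hy⟩, hμ⟩

theorem finite_sep_prod (hX : ∀ μ, {x ∈ X | w x = μ}.Finite)
    (hY : ∀ μ, {y ∈ Y | w' y = μ}.Finite) (μ : σ →₀ ℕ) :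
    {p ∈ X ×ˢ Y | w p.1 + w' p.2 = μ}.Finite := by
  rw [sep_prod_eq_biUnion]
  exact (antidiagonal μ).finite_toSet.biUnion fun q _ => (hX q.1).prod (hY q.2)

theorem genFun_mul (hX : ∀ μ, {x ∈ X | w x = μ}.Finite) (hY : ∀ μ, {y ∈ Y | w' y = μ}.Finite) :
    genFun X w * genFun Y w' = genFun (X ×ˢ Y) fun p => w p.1 + w' p.2 := by
  ext μ
  have hdisj : (antidiagonal μ : Set ((σ →₀ ℕ) × (σ →₀ ℕ))).PairwiseDisjoint
      fun q => {x ∈ X | w x = q.1} ×ˢ {y ∈ Y | w' y = q.2} := by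
    rintro q - q' - hne
    refine Set.disjoint_left.mpr fun p hp hp' => hne (Prod.ext ?_ ?_)
    · exact hp.1.2.symm.trans hp'.1.2
    · exact hp.2.2.symm.trans hp'.2.2
  rw [MvPowerSeries.coeff_mul, coeff_genFun, sep_prod_eq_biUnion, ← Finset.set_biUnion_coe,
    (antidiagonal μ).finite_toSet.ncard_biUnion (fun q _ => (hX q.1).prod (hY q.2)) hdisj,
    finsum_mem_coe_finset, Nat.cast_sum]
  simp only [coeff_genFun, Set.ncard_prod, Nat.cast_mul]

end GenFun

variable {I J K : Set Box} {u l v : Box}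

/-- `a` may stand immediately left of `b` in a row of a super tableau. -/
def RowOK (a b : ℕ ⊕ ℕ) : Prop :=
  entryLE a b ∧ ∀ m n : ℕ, a = Sum.inr m → b = Sum.inr n → m < n

/-- `a` may stand immediately above `b` in a column of a super tableau. -/
def ColOK (a b : ℕ ⊕ ℕ) : Prop :=
  entryLE a b ∧ ∀ m n : ℕ, a = Sum.inl m → b = Sum.inl n → m < n

-- An `x` may repeat along a row but not down a column, a `y` the other way round.
theorem rowOK_iff_not_colOK (a b : ℕ ⊕ ℕ) : RowOK a b ↔ ¬ColOK b a := by
  rcases a with a | a <;> rcases b with b | b <;> simp [RowOK, ColOK, entryLE] <;> omega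

def AdjacentOK (A B : Set Box) (T : Box → ℕ ⊕ ℕ) : Prop :=
  (∀ a ∈ A, a + (0, 1) ∈ B → RowOK (T a) (T (a + (0, 1)))) ∧
  (∀ a ∈ A, a + (1, 0) ∈ B → ColOK (T a) (T (a + (1, 0))))

theorem isSuperSSYT_iff (D : Set Box) (T : Box → ℕ ⊕ ℕ) :
    IsSuperSSYT D T ↔ AdjacentOK D D T ∧ ∀ b ∉ D, T b = Sum.inl 0 := by
  have hright (b : Box) : ((b.1, b.2 + 1) : Box) = b + (0, 1) := by ext <;> simp
  have hdown (b : Box) : ((b.1 + 1, b.2) : Box) = b + (1, 0) := by ext <;> simp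
  simp only [IsSuperSSYT, AdjacentOK, RowOK, ColOK, hright, hdown, imp_and, forall_and]
  tauto

theorem adjacentOK_union_left {A A' B : Set Box} {T : Box → ℕ ⊕ ℕ} :
    AdjacentOK (A ∪ A') B T ↔ AdjacentOK A B T ∧ AdjacentOK A' B T := by
  simp only [AdjacentOK, Set.mem_union, or_imp, forall_and]
  tauto

theorem adjacentOK_union_right {A B B' : Set Box} {T : Box → ℕ ⊕ ℕ} :
    AdjacentOK A (B ∪ B') T ↔ AdjacentOK A B T ∧ AdjacentOK A B' T := by
  simp only [AdjacentOK, Set.mem_union, or_imp, forall_and]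
  tauto

theorem adjacentOK_congr {A B : Set Box} {T T' : Box → ℕ ⊕ ℕ} (h : Set.EqOn T T' (A ∪ B)) :
    AdjacentOK A B T ↔ AdjacentOK A B T' := by
  unfold AdjacentOK
  refine and_congr (forall₂_congr fun a ha => imp_congr_right fun hb => ?_)
    (forall₂_congr fun a ha => imp_congr_right fun hb => ?_) <;>
  rw [h (Or.inl ha), h (Or.inr hb)]

theorem isSuperSSYT_union_piecewise_iff [DecidablePred (· ∈ I)]
    (hdisj : Disjoint I K) {T₁ T₂ : Box → ℕ ⊕ ℕ} (h₁ : ∀ b ∉ I, T₁ b = Sum.inl 0)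
    (h₂ : ∀ b ∉ K, T₂ b = Sum.inl 0) :
    IsSuperSSYT (I ∪ K) (I.piecewise T₁ T₂) ↔ IsSuperSSYT I T₁ ∧ IsSuperSSYT K T₂ ∧
      AdjacentOK I K (I.piecewise T₁ T₂) ∧ AdjacentOK K I (I.piecewise T₁ T₂) := by
  have hI : Set.EqOn (I.piecewise T₁ T₂) T₁ (I ∪ I) := fun b hb =>
    Set.piecewise_eq_of_mem _ _ _ (Set.union_self I ▸ hb)
  have hK : Set.EqOn (I.piecewise T₁ T₂) T₂ (K ∪ K) := fun b hb =>
    Set.piecewise_eq_of_notMem _ _ _ (Set.disjoint_right.mp hdisj (Set.union_self K ▸ hb))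
  have hout : ∀ b ∉ I ∪ K, I.piecewise T₁ T₂ b = Sum.inl 0 := fun b hb =>
    (Set.piecewise_eq_of_notMem _ _ _ fun h => hb (Or.inl h)).trans (h₂ b fun h => hb (Or.inr h))
  simp only [isSuperSSYT_iff, adjacentOK_union_left, adjacentOK_union_right,
    ← adjacentOK_congr hI, ← adjacentOK_congr hK]
  tauto

theorem mem_boxTranslate {v b : Box} {D : Set Box} : b ∈ boxTranslate v D ↔ b - v ∈ D := by
  simp [boxTranslate, Set.image_add_right, sub_eq_add_neg]

theorem adjacentOK_boxTranslate (v : Box) (A B : Set Box) (T : Box → ℕ ⊕ ℕ) :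
    AdjacentOK (boxTranslate v A) (boxTranslate v B) (fun b => T (b - v)) ↔ AdjacentOK A B T := by
  simp only [AdjacentOK, mem_boxTranslate, add_sub_right_comm]
  exact and_congr ((Equiv.subRight v).forall_congr fun _ => Iff.rfl)
    ((Equiv.subRight v).forall_congr fun _ => Iff.rfl)

theorem isSuperSSYT_boxTranslate_iff (v : Box) (D : Set Box) (T : Box → ℕ ⊕ ℕ) :
    IsSuperSSYT (boxTranslate v D) (fun b => T (b - v)) ↔ IsSuperSSYT D T := by
  simp only [isSuperSSYT_iff, adjacentOK_boxTranslate, mem_boxTranslate]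
  exact and_congr_right' ((Equiv.subRight v).forall_congr fun _ => Iff.rfl)

def content {D : Set Box} (hD : D.Finite) (T : Box → ℕ ⊕ ℕ) : ℕ ⊕ ℕ →₀ ℕ :=
  Finsupp.ofSupportFinite (fun x => {b ∈ D | T b = x}.ncard) <| (hD.image T).subset
    fun x hx => by
      obtain ⟨b, hb, rfl⟩ := Set.nonempty_of_ncard_ne_zero hx
      exact ⟨b, hb, rfl⟩

theorem content_apply {D : Set Box} (hD : D.Finite) (T : Box → ℕ ⊕ ℕ) (x : ℕ ⊕ ℕ) :
    content hD T x = {b ∈ D | T b = x}.ncard :=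
  rfl

theorem content_congr {D : Set Box} (hD : D.Finite) {T T' : Box → ℕ ⊕ ℕ} (h : Set.EqOn T T' D) :
    content hD T = content hD T' := by
  ext x
  simp only [content_apply]
  congr 1
  ext b
  exact and_congr_right fun hb => by rw [h hb]

theorem content_union (hI : I.Finite) (hK : K.Finite) (hdisj : Disjoint I K)
    (T : Box → ℕ ⊕ ℕ) : content (hI.union hK) T = content hI T + content hK T := by
  ext x
  rw [Finsupp.add_apply, content_apply, content_apply, content_apply,
    ← Set.ncard_union_eq (hdisj.mono (fun b hb => hb.1) fun b hb => hb.1)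
      (hI.subset fun b hb => hb.1) (hK.subset fun b hb => hb.1)]
  congr 1
  ext b
  simp only [Set.mem_ofPred_eq, Set.mem_union]
  tauto

theorem content_boxTranslate {v : Box} {D : Set Box} (hD : D.Finite)
    (hD' : (boxTranslate v D).Finite) (T : Box → ℕ ⊕ ℕ) :
    content hD' (fun b => T (b - v)) = content hD T := by
  ext x
  rw [content_apply, content_apply,
    ← Set.ncard_image_of_injective {b ∈ D | T b = x} (add_left_injective v)]
  congr 1
  ext b
  simp only [Set.mem_ofPred_eq, mem_boxTranslate, Set.image_add_right, Set.mem_preimage,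
    ← sub_eq_add_neg]

theorem finite_isSuperSSYT_content {D : Set Box} (hD : D.Finite) (μ : ℕ ⊕ ℕ →₀ ℕ) :
    {T ∈ {T | IsSuperSSYT D T} | content hD T = μ}.Finite := by
  have : Finite D := hD.to_subtype
  let V : Set (ℕ ⊕ ℕ) := insert (Sum.inl 0) μ.support
  refine Set.Finite.of_finite_image (f := fun T (b : D) => T b) ?_ ?_
  · refine (Set.Finite.pi (t := fun _ : D => V) fun _ => μ.support.finite_toSet.insert _).subset ?_
    rintro _ ⟨T, ⟨-, rfl⟩, rfl⟩ ⟨b, hb⟩ -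
    refine Set.mem_insert_iff.mpr (Or.inr (Finsupp.mem_support_iff.mpr ?_))
    rw [content_apply]
    have hfin : {c ∈ D | T c = T b}.Finite := hD.subset fun c hc => hc.1
    exact ((Set.ncard_pos hfin).mpr ⟨b, hb, rfl⟩).ne'
  · rintro T ⟨hT, -⟩ T' ⟨hT', -⟩ h
    funext b
    by_cases hb : b ∈ D
    · exact congrFun h ⟨b, hb⟩
    · rw [((isSuperSSYT_iff D T).mp hT).2 b hb, ((isSuperSSYT_iff D T').mp hT').2 b hb]

theorem superSchur_eq_genFun {D : Set Box} (hD : D.Finite) :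
    superSchur D = genFun {T | IsSuperSSYT D T} (content hD) := by
  ext μ
  rw [coeff_genFun]
  refine congrArg (fun s : Set (Box → ℕ ⊕ ℕ) => (s.ncard : ℤ)) (Set.ext fun T => ?_)
  simp only [Set.mem_ofPred_eq, Finsupp.ext_iff, content_apply, eq_comm]

open Classical in
def glue (I : Set Box) (v : Box) (T₁ T₂ : Box → ℕ ⊕ ℕ) : Box → ℕ ⊕ ℕ :=
  I.piecewise T₁ fun b => T₂ (b - v)

open Classical in
def unglue (I J : Set Box) (v : Box) (T : Box → ℕ ⊕ ℕ) : (Box → ℕ ⊕ ℕ) × (Box → ℕ ⊕ ℕ) :=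
  (I.piecewise T fun _ => Sum.inl 0, fun c => if c ∈ J then T (c + v) else Sum.inl 0)

theorem isSuperSSYT_glue_iff (hu : u ∈ I) (hl : l ∈ J) (hdisj : Disjoint I (boxTranslate v J))
    {edge : ℕ ⊕ ℕ → ℕ ⊕ ℕ → Prop}
    (hedge : ∀ T, AdjacentOK I (boxTranslate v J) T ∧ AdjacentOK (boxTranslate v J) I T ↔
      edge (T u) (T (l + v)))
    {T₁ T₂ : Box → ℕ ⊕ ℕ} (h₁ : ∀ b ∉ I, T₁ b = Sum.inl 0) (h₂ : ∀ c ∉ J, T₂ c = Sum.inl 0) :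
    IsSuperSSYT (I ∪ boxTranslate v J) (glue I v T₁ T₂) ↔
      IsSuperSSYT I T₁ ∧ IsSuperSSYT J T₂ ∧ edge (T₁ u) (T₂ l) := by
  classical
  have hlv : l + v ∈ boxTranslate v J := mem_boxTranslate.mpr (by simpa using hl)
  rw [glue, isSuperSSYT_union_piecewise_iff hdisj h₁ fun b hb => h₂ _ (mt mem_boxTranslate.mpr hb),
    isSuperSSYT_boxTranslate_iff, hedge, Set.piecewise_eq_of_mem _ _ _ hu,
    Set.piecewise_eq_of_notMem _ _ _ (Set.disjoint_right.mp hdisj hlv), add_sub_cancel_right]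

theorem unglue_glue (hdisj : Disjoint I (boxTranslate v J)) {T₁ T₂ : Box → ℕ ⊕ ℕ}
    (h₁ : ∀ b ∉ I, T₁ b = Sum.inl 0) (h₂ : ∀ c ∉ J, T₂ c = Sum.inl 0) :
    unglue I J v (glue I v T₁ T₂) = (T₁, T₂) := by
  refine Prod.ext (funext fun b => ?_) (funext fun c => ?_)
  · by_cases hb : b ∈ I <;> simp [unglue, glue, hb, h₁]
  · by_cases hc : c ∈ J
    · have hcv : c + v ∉ I := Set.disjoint_right.mp hdisj (mem_boxTranslate.mpr (by simpa using hc))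
      simp [unglue, glue, hc, hcv]
    · simp [unglue, hc, h₂]

theorem glue_unglue {T : Box → ℕ ⊕ ℕ} (hT : ∀ b ∉ I ∪ boxTranslate v J, T b = Sum.inl 0) :
    glue I v (unglue I J v T).1 (unglue I J v T).2 = T := by
  funext b
  by_cases hb : b ∈ I
  · simp [unglue, glue, hb]
  · by_cases hbJ : b - v ∈ J
    · simp [unglue, glue, hb, hbJ]
    · simp [unglue, glue, hb, hbJ, hT b (by simp [mem_boxTranslate, hb, hbJ])]

theorem superSchur_union_boxTranslate_eq_genFun (hI : I.Finite) (hJ : J.Finite) (hu : u ∈ I)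
    (hl : l ∈ J) (hdisj : Disjoint I (boxTranslate v J)) {edge : ℕ ⊕ ℕ → ℕ ⊕ ℕ → Prop}
    (hedge : ∀ T, AdjacentOK I (boxTranslate v J) T ∧ AdjacentOK (boxTranslate v J) I T ↔
      edge (T u) (T (l + v))) :
    superSchur (I ∪ boxTranslate v J) =
      genFun {p ∈ {T | IsSuperSSYT I T} ×ˢ {T | IsSuperSSYT J T} | edge (p.1 u) (p.2 l)}
        fun p => content hI p.1 + content hJ p.2 := by
  have hK : (boxTranslate v J).Finite := hJ.image _
  have vanish {D : Set Box} {T : Box → ℕ ⊕ ℕ} (hT : IsSuperSSYT D T) :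
      ∀ b ∉ D, T b = Sum.inl 0 :=
    ((isSuperSSYT_iff D T).mp hT).2
  rw [superSchur_eq_genFun (hI.union hK)]
  refine genFun_eq_of_bijOn (fun p => glue I v p.1 p.2)
    (Set.InvOn.bijOn (f' := unglue I J v) ⟨?_, ?_⟩ ?_ ?_) ?_
  · rintro ⟨T₁, T₂⟩ ⟨⟨h₁, h₂⟩, -⟩
    exact unglue_glue hdisj (vanish h₁) (vanish h₂)
  · intro T hT
    exact glue_unglue (vanish hT)
  · rintro ⟨T₁, T₂⟩ ⟨⟨h₁, h₂⟩, he⟩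
    exact (isSuperSSYT_glue_iff hu hl hdisj hedge (vanish h₁) (vanish h₂)).mpr ⟨h₁, h₂, he⟩
  · intro T hT
    rw [Set.mem_ofPred_eq, ← glue_unglue (J := J) (vanish hT)] at hT
    obtain ⟨h₁, h₂, he⟩ := (isSuperSSYT_glue_iff hu hl hdisj hedge
      (by simp +contextual [unglue]) (by simp +contextual [unglue])).mp hT
    exact ⟨⟨h₁, h₂⟩, he⟩
  · rintro ⟨T₁, T₂⟩ -
    classical
    rw [content_union hI hK hdisj,
      content_congr hI (T' := T₁) fun b hb => Set.piecewise_eq_of_mem _ _ _ hb,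
      content_congr hK (T' := fun b => T₂ (b - v))
        fun b hb => Set.piecewise_eq_of_notMem _ _ _ (Set.disjoint_right.mp hdisj hb),
      content_boxTranslate hJ]

theorem adjacentOK_glue_right_iff (hI : ∀ c ∈ I, u.1 ≤ c.1 ∧ c.2 ≤ u.2)
    (hK : ∀ c ∈ K, c.1 ≤ u.1 ∧ u.2 + 1 ≤ c.2) (hu : u ∈ I) (hw : u + (0, 1) ∈ K)
    (T : Box → ℕ ⊕ ℕ) :
    AdjacentOK I K T ∧ AdjacentOK K I T ↔ RowOK (T u) (T (u + (0, 1))) := by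
  refine ⟨fun h => h.1.1 u hu hw, fun h => ⟨⟨fun a ha ha' => ?_, fun a ha ha' => ?_⟩,
    ⟨fun a ha ha' => ?_, fun a ha ha' => ?_⟩⟩⟩
  · obtain rfl : a = u := by
      have := hI a ha; have := hK _ ha'
      simp only [Prod.fst_add, Prod.snd_add] at *
      ext <;> omega
    exact h
  · have := hI a ha; have := hK _ ha'; simp only [Prod.fst_add] at *; omega
  · have := hK a ha; have := hI _ ha'; simp only [Prod.snd_add] at *; omega
  · have := hK a ha; have := hI _ ha'; simp only [Prod.snd_add] at *; omega

theorem adjacentOK_glue_up_iff (hI : ∀ c ∈ I, u.1 ≤ c.1 ∧ c.2 ≤ u.2)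
    (hK : ∀ c ∈ K, c.1 ≤ u.1 - 1 ∧ u.2 ≤ c.2) (hu : u ∈ I) (hw : u - (1, 0) ∈ K)
    (T : Box → ℕ ⊕ ℕ) :
    AdjacentOK I K T ∧ AdjacentOK K I T ↔ ColOK (T (u - (1, 0))) (T u) := by
  refine ⟨fun h => by simpa using h.2.2 _ hw (by rwa [sub_add_cancel]),
    fun h => ⟨⟨fun a ha ha' => ?_, fun a ha ha' => ?_⟩, ⟨fun a ha ha' => ?_, fun a ha ha' => ?_⟩⟩⟩
  · have := hI a ha; have := hK _ ha'; simp only [Prod.fst_add] at *; omega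
  · have := hI a ha; have := hK _ ha'; simp only [Prod.fst_add] at *; omega
  · have := hK a ha; have := hI _ ha'; simp only [Prod.snd_add] at *; omega
  · obtain rfl : a = u - (1, 0) := by
      have := hK a ha; have := hI _ ha'
      simp only [Prod.fst_add, Prod.snd_add] at *
      ext <;> simp <;> omega
    rwa [sub_add_cancel]

theorem superSchur_glue_right_eq_genFun (hI : I.Finite) (hJ : J.Finite) (hu : u ∈ I) (hl : l ∈ J)
    (hIu : ∀ c ∈ I, u.1 ≤ c.1 ∧ c.2 ≤ u.2) (hJl : ∀ c ∈ J, c.1 ≤ l.1 ∧ l.2 ≤ c.2) :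
    superSchur (I ∪ boxTranslate (u + (0, 1) - l) J) =
      genFun {p ∈ {T | IsSuperSSYT I T} ×ˢ {T | IsSuperSSYT J T} | RowOK (p.1 u) (p.2 l)}
        fun p => content hI p.1 + content hJ p.2 := by
  have hK : ∀ c ∈ boxTranslate (u + (0, 1) - l) J, c.1 ≤ u.1 ∧ u.2 + 1 ≤ c.2 :=
    Set.forall_mem_image.mpr fun c hc => by
      have := hJl c hc
      simp only [Prod.fst_add, Prod.snd_add, Prod.fst_sub, Prod.snd_sub]
      omega
  have hw : u + (0, 1) ∈ boxTranslate (u + (0, 1) - l) J := by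
    simpa [mem_boxTranslate] using hl
  refine superSchur_union_boxTranslate_eq_genFun hI hJ hu hl ?_ fun T => ?_
  · exact Set.disjoint_left.mpr fun c hcI hcK => by
      have := hIu c hcI; have := hK c hcK; omega
  · rw [add_sub_cancel, adjacentOK_glue_right_iff hIu hK hu hw]

theorem superSchur_glue_up_eq_genFun (hI : I.Finite) (hJ : J.Finite) (hu : u ∈ I) (hl : l ∈ J)
    (hIu : ∀ c ∈ I, u.1 ≤ c.1 ∧ c.2 ≤ u.2) (hJl : ∀ c ∈ J, c.1 ≤ l.1 ∧ l.2 ≤ c.2) :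
    superSchur (I ∪ boxTranslate (u - (1, 0) - l) J) =
      genFun {p ∈ {T | IsSuperSSYT I T} ×ˢ {T | IsSuperSSYT J T} | ColOK (p.2 l) (p.1 u)}
        fun p => content hI p.1 + content hJ p.2 := by
  have hK : ∀ c ∈ boxTranslate (u - (1, 0) - l) J, c.1 ≤ u.1 - 1 ∧ u.2 ≤ c.2 :=
    Set.forall_mem_image.mpr fun c hc => by
      have := hJl c hc
      simp only [Prod.fst_add, Prod.snd_add, Prod.fst_sub, Prod.snd_sub]
      omega
  have hw : u - (1, 0) ∈ boxTranslate (u - (1, 0) - l) J := by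
    simpa [mem_boxTranslate] using hl
  refine superSchur_union_boxTranslate_eq_genFun (edge := fun a b => ColOK b a) hI hJ hu hl ?_
    fun T => ?_
  · exact Set.disjoint_left.mpr fun c hcI hcK => by
      have := hIu c hcI; have := hK c hcK; omega
  · rw [add_sub_cancel, adjacentOK_glue_up_iff hIu hK hu hw]

end SuperSchur

theorem IsSkewShape.finite {D : Set Box} (hD : IsSkewShape D) : D.Finite := by
  obtain ⟨lam, mu, -, rfl⟩ := hD
  obtain ⟨N, hN⟩ := lam.eventually_zero
  refine ((Set.finite_Icc (1 : ℤ) N).prod (Set.finite_Icc (1 : ℤ) (lam.part 0))).subset ?_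
  rintro c ⟨h1, h2, h3⟩
  have hrow : c.1 ≤ N := by
    by_contra h
    have := hN c.1.toNat (by omega)
    omega
  have hcol : (lam.part c.1.toNat : ℤ) ≤ lam.part 0 := by
    exact_mod_cast lam.antitone (Nat.zero_le _)
  exact ⟨⟨h1, hrow⟩, by omega, by omega⟩

theorem IsUpperRightCorner.le_fst_and_snd_le {I : Set Box} {u : Box}
    (hu : IsUpperRightCorner I u) (hI : IsSkewShape I) : ∀ c ∈ I, u.1 ≤ c.1 ∧ c.2 ≤ u.2 := by
  obtain ⟨lam, mu, -, rfl⟩ := hI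
  obtain ⟨⟨hu1, hu2, hu3⟩, htop, hright⟩ := hu
  have hend : (lam.part u.1.toNat : ℤ) ≤ u.2 :=
    hright (u.1, lam.part u.1.toNat) ⟨hu1, by dsimp only; omega, le_rfl⟩ rfl
  intro c hc
  have hmono : lam.part c.1.toNat ≤ lam.part u.1.toNat :=
    lam.antitone (by have := htop c hc; omega)
  exact ⟨htop c hc, by have := hc.2.2; omega⟩

theorem IsLowerLeftCorner.fst_le_and_le_snd {J : Set Box} {l : Box}
    (hl : IsLowerLeftCorner J l) (hJ : IsSkewShape J) : ∀ c ∈ J, c.1 ≤ l.1 ∧ l.2 ≤ c.2 := by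
  obtain ⟨lam, mu, -, rfl⟩ := hJ
  obtain ⟨⟨hl1, hl2, hl3⟩, hbottom, hleft⟩ := hl
  have hstart : l.2 ≤ (mu.part l.1.toNat : ℤ) + 1 :=
    hleft (l.1, mu.part l.1.toNat + 1) ⟨hl1, by dsimp only; omega, by dsimp only; omega⟩ rfl
  intro c hc
  have hmono : mu.part l.1.toNat ≤ mu.part c.1.toNat :=
    mu.antitone (by have := hbottom c hc; omega)
  exact ⟨hbottom c hc, by have := hc.2.1; omega⟩

open SuperSchur

theorem superSchur_mul_eq_glue_general
    (I J : Set Box) (hI : IsSkewShape I) (hJ : IsSkewShape J)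
    (u l : Box) (hu : IsUpperRightCorner I u) (hl : IsLowerLeftCorner J l) :
    superSchur I * superSchur J =
      superSchur (I ∪ boxTranslate (u.1 - l.1, u.2 + 1 - l.2) J) +
      superSchur (I ∪ boxTranslate (u.1 - 1 - l.1, u.2 - l.2) J) := by
  have hright : ((u.1 - l.1, u.2 + 1 - l.2) : Box) = u + (0, 1) - l := by ext <;> simp
  have hup : ((u.1 - 1 - l.1, u.2 - l.2) : Box) = u - (1, 0) - l := by ext <;> simp
  have hIu := hu.le_fst_and_snd_le hI
  have hJl := hl.fst_le_and_le_snd hJ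
  have hfI := finite_isSuperSSYT_content hI.finite
  have hfJ := finite_isSuperSSYT_content hJ.finite
  rw [hright, hup, superSchur_glue_right_eq_genFun hI.finite hJ.finite hu.1 hl.1 hIu hJl,
    superSchur_glue_up_eq_genFun hI.finite hJ.finite hu.1 hl.1 hIu hJl,
    superSchur_eq_genFun hI.finite, superSchur_eq_genFun hJ.finite, genFun_mul hfI hfJ,
    ← genFun_sep_add_sep_not (finite_sep_prod hfI hfJ) fun p => RowOK (p.1 u) (p.2 l)]
  simp only [rowOK_iff_not_colOK, not_not]

/-- **supersymmetric product rule.** For skew diagrams `I` and `J`,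
`s_I(X,Y) · s_J(X,Y) = s_{I▶J}(X,Y) + s_{I↑J}(X,Y)`. -/
theorem superSchur_mul_eq_glue
    (I J : Set Box) (hI : IsSkewShape I) (hJ : IsSkewShape J)
    (hIne : I.Nonempty) (hJne : J.Nonempty)
    (u l : Box) (hu : IsUpperRightCorner I u) (hl : IsLowerLeftCorner J l) :
    superSchur I * superSchur J =
      superSchur (I ∪ boxTranslate (u.1 - l.1, u.2 + 1 - l.2) J) +
      superSchur (I ∪ boxTranslate (u.1 - 1 - l.1, u.2 - l.2) J) :=
  superSchur_mul_eq_glue_general I J hI hJ u l hu hl
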